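/- arXiv:1911.04181 — 2 statements merged into one kernel-verified Lean document; each statement's English description precedes it below -/
import Mathlib

section
/- Let ρ : Γ₂ → PSL(2,ℂ) be a non-elementary group homomorphism such that: ρ(a₁) and ρ(b₁) are loxodromic; the subgroup generated by ρ(a₁) and ρ(b₁) is non-elementary; ρ(a₁) does not send a fixed point of ρ(b₁) to the other; ρ(b₂) is loxodromic; ρ(a₂)⁻¹ρ(b₂)⁻¹ρ(a₂) = ρ(b₂); and ρ(b₂a₁⁻¹) interchanges the two fixed points of ρ(b₁). Then ρ is a pentagon representation, i.e. there exists a homomorphism ρ' : Γ → PSL(2,ℂ) with ρ' ∘ ι = ρ and ρ'(qᵢ) = 1 for exactly one index i ∈ {1,…,6}. -/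
/- Common setup: PSL(2,ℂ), its action on ℙ¹(ℂ), loxodromic/parabolic/elliptic elements,
elementary subgroups, surface groups, the pentagon group Γ and the embedding ι. -/

noncomputable section

open Matrix

/-- `SL(2,ℂ)`. -/
abbrev SL2C : Type := Matrix.SpecialLinearGroup (Fin 2) ℂ

instance : TopologicalSpace SL2C := instTopologicalSpaceSubtype

/-- `PSL(2,ℂ)`, the quotient of `SL(2,ℂ)` by its center `{±I}`. -/
abbrev PSL2C : Type := SL2C ⧸ Subgroup.center SL2C

/-- The quotient map `SL(2,ℂ) → PSL(2,ℂ)`. -/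
def projPSL : SL2C →* PSL2C := QuotientGroup.mk' (Subgroup.center SL2C)

/-- The complex projective line `ℙ¹(ℂ)`. -/
abbrev P1 : Type := Projectivization ℂ (Fin 2 → ℂ)

/-- The square of the trace, well defined on `PSL(2,ℂ)`. -/
def trSq (g : PSL2C) : ℂ :=
  (Matrix.trace ((Quotient.out g : SL2C) : Matrix (Fin 2) (Fin 2) ℂ)) ^ 2

/-- `g` is loxodromic iff `tr² g` is not a real number in `[0,4]`. -/
def IsLoxodromic (g : PSL2C) : Prop := ¬ ∃ r : ℝ, 0 ≤ r ∧ r ≤ 4 ∧ trSq g = (r : ℂ)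

/-- `g` is parabolic iff `g ≠ 1` and `tr² g = 4`. -/
def IsParabolic (g : PSL2C) : Prop := g ≠ 1 ∧ trSq g = 4

/-- `g` is elliptic iff `g ≠ 1` and `tr² g` is a real number in `[0,4)`. -/
def IsElliptic (g : PSL2C) : Prop := g ≠ 1 ∧ ∃ r : ℝ, 0 ≤ r ∧ r < 4 ∧ trSq g = (r : ℂ)

lemma sl2_toLin'_injective (g : SL2C) :
    Function.Injective (Matrix.toLin' (g : Matrix (Fin 2) (Fin 2) ℂ)) := by
  intro v w h
  have h2 : Matrix.toLin' ((g⁻¹ : SL2C) : Matrix (Fin 2) (Fin 2) ℂ)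
      (Matrix.toLin' ((g : SL2C) : Matrix (Fin 2) (Fin 2) ℂ) v) =
      Matrix.toLin' ((g⁻¹ : SL2C) : Matrix (Fin 2) (Fin 2) ℂ)
      (Matrix.toLin' ((g : SL2C) : Matrix (Fin 2) (Fin 2) ℂ) w) := by rw [h]
  rwa [← Matrix.toLin'_mul_apply, ← Matrix.toLin'_mul_apply,
    ← Matrix.SpecialLinearGroup.coe_mul, inv_mul_cancel,
    Matrix.SpecialLinearGroup.coe_one, Matrix.toLin'_one, LinearMap.id_apply,
    LinearMap.id_apply] at h2

/-- The action of `PSL(2,ℂ)` on `ℙ¹(ℂ)` by Möbius transformations (independent of the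
choice of representative, since the center acts trivially on lines). -/
def pslAct (g : PSL2C) (x : P1) : P1 :=
  Projectivization.map (Matrix.toLin' ((Quotient.out g : SL2C) : Matrix (Fin 2) (Fin 2) ℂ))
    (sl2_toLin'_injective _) x

/-- A subgroup of `PSL(2,ℂ)` is elementary if it has a nonempty invariant subset of `ℙ¹(ℂ)`
with at most two elements, or its closure is compact. -/
def IsElementarySubgroup (G : Subgroup PSL2C) : Prop :=
  (∃ S : Set P1, S.Nonempty ∧ S.Finite ∧ S.ncard ≤ 2 ∧ ∀ g ∈ G, pslAct g '' S = S) ∨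
    IsCompact (closure (G : Set PSL2C))

/-- A homomorphism to `PSL(2,ℂ)` is non-elementary if its image is non-elementary. -/
def IsNonElem {H : Type*} [Group H] (ρ : H →* PSL2C) : Prop :=
  ¬ IsElementarySubgroup ρ.range

/-- `g` sends a fixed point of `h` to the other one. -/
def SendsFixedToOther (g h : PSL2C) : Prop :=
  ∃ p q : P1, p ≠ q ∧ pslAct h p = p ∧ pslAct h q = q ∧ (pslAct g p = q ∨ pslAct g q = p)

/-- `g` interchanges the two fixed points of `h`. -/
def InterchangesFixed (g h : PSL2C) : Prop :=
  ∃ p q : P1, p ≠ q ∧ pslAct h p = p ∧ pslAct h q = q ∧ pslAct g p = q ∧ pslAct g q = p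

/-- `PSL(2,ℝ)` as a subgroup of `PSL(2,ℂ)`: the image of `SL(2,ℝ)`. -/
def PSL2R : Subgroup PSL2C :=
  (projPSL.comp (Matrix.SpecialLinearGroup.map (n := Fin 2) Complex.ofRealHom)).range

/-- `γ₁, γ₂` generate a rank-two Schottky group: the induced map from the free group `F₂` is
injective, with discrete image, all of whose nontrivial elements are loxodromic. -/
def GeneratesSchottky (γ₁ γ₂ : PSL2C) : Prop :=
  Function.Injective (FreeGroup.lift ![γ₁, γ₂] : FreeGroup (Fin 2) →* PSL2C) ∧
    DiscreteTopology ((FreeGroup.lift ![γ₁, γ₂] : FreeGroup (Fin 2) →* PSL2C).range) ∧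
    ∀ g ∈ (FreeGroup.lift ![γ₁, γ₂] : FreeGroup (Fin 2) →* PSL2C).range, g ≠ 1 → IsLoxodromic g

/-- The commutator `[x,y] = y⁻¹x⁻¹yx` in a free group. -/
def commF {α : Type*} (x y : FreeGroup α) : FreeGroup α := y⁻¹ * x⁻¹ * y * x

/-- The surface relator `[a_g,b_g]⋯[a₁,b₁]`. -/
def surfaceRel (g : ℕ) : FreeGroup (Fin g × Bool) :=
  (((List.finRange g).reverse).map
    (fun i => commF (FreeGroup.of (i, false)) (FreeGroup.of (i, true)))).prod

/-- The genus-`g` surface group `Γ_g`. -/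
abbrev SurfaceGroup (g : ℕ) : Type :=
  PresentedGroup ({surfaceRel g} : Set (FreeGroup (Fin g × Bool)))

/-- The generator `a_{i+1}` of `Γ_g`. -/
def sgA (g : ℕ) (i : Fin g) : SurfaceGroup g := PresentedGroup.of (i, false)

/-- The generator `b_{i+1}` of `Γ_g`. -/
def sgB (g : ℕ) (i : Fin g) : SurfaceGroup g := PresentedGroup.of (i, true)

/-- The genus-2 surface group `Γ₂`. -/
abbrev Gamma2 : Type := SurfaceGroup 2
def a1 : Gamma2 := sgA 2 0
def b1 : Gamma2 := sgB 2 0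
def a2 : Gamma2 := sgA 2 1
def b2 : Gamma2 := sgB 2 1

/-- Relations for the group `Γ = ⟨q₁,…,q₆ ∣ qᵢ² = 1, q₁q₂q₃q₄q₅q₆ = 1⟩`. -/
def pentagonRels : Set (FreeGroup (Fin 6)) :=
  (Set.range fun i : Fin 6 => FreeGroup.of i * FreeGroup.of i) ∪
    {((List.finRange 6).map FreeGroup.of).prod}

/-- The group `Γ = ⟨q₁,…,q₆ ∣ qᵢ² = 1, q₁q₂q₃q₄q₅q₆ = 1⟩`. -/
abbrev GammaP : Type := PresentedGroup pentagonRels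

/-- The generator `q_{i+1}` of `Γ`. -/
def qgen (i : Fin 6) : GammaP := PresentedGroup.of i

lemma qgen_mul_self (i : Fin 6) : qgen i * qgen i = 1 := by
  have hmem : FreeGroup.of i * FreeGroup.of i ∈ pentagonRels :=
    Set.mem_union_left _ ⟨i, rfl⟩
  have h : (PresentedGroup.mk pentagonRels (FreeGroup.of i * FreeGroup.of i)) = 1 :=
    (QuotientGroup.eq_one_iff _).mpr (Subgroup.subset_normalClosure hmem)
  rw [_root_.map_mul] at h
  exact h

lemma qgen_prod : qgen 0 * (qgen 1 * (qgen 2 * (qgen 3 * (qgen 4 * qgen 5)))) = 1 := by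
  have hmem : ((List.finRange 6).map FreeGroup.of).prod ∈ pentagonRels :=
    Set.mem_union_right _ rfl
  have h : (PresentedGroup.mk pentagonRels (((List.finRange 6).map FreeGroup.of).prod)) = 1 :=
    (QuotientGroup.eq_one_iff _).mpr (Subgroup.subset_normalClosure hmem)
  have h6 : List.finRange 6 = [0, 1, 2, 3, 4, 5] := by decide
  rw [h6] at h
  simpa [mul_assoc, qgen, PresentedGroup.of] using h

lemma pent_helper {G : Type*} [Group G] (x : Fin 6 → G) (hx : ∀ i, x i * x i = 1)
    (hp : x 0 * (x 1 * (x 2 * (x 3 * (x 4 * x 5)))) = 1) :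
    (x 4 * x 5)⁻¹ * (x 4 * x 3)⁻¹ * (x 4 * x 5) * (x 4 * x 3) *
      ((x 1 * x 2)⁻¹ * (x 1 * x 0)⁻¹ * (x 1 * x 2) * (x 1 * x 0)) = 1 := by
  have hinv : ∀ i, (x i)⁻¹ = x i := fun i => inv_eq_of_mul_eq_one_right (hx i)
  have hrev : x 5 * (x 4 * (x 3 * (x 2 * (x 1 * x 0)))) = 1 := by
    have h := congrArg (·⁻¹) hp
    simpa [_root_.mul_inv_rev, hinv, mul_assoc] using h
  have key : ∀ (i : Fin 6) (t : G), x i * (x i * t) = t := fun i t => by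
    rw [← mul_assoc, hx, one_mul]
  have key2 : ∀ t : G, x 5 * (x 4 * (x 3 * (x 2 * (x 1 * (x 0 * t))))) = t := fun t => by
    calc x 5 * (x 4 * (x 3 * (x 2 * (x 1 * (x 0 * t)))))
        = (x 5 * (x 4 * (x 3 * (x 2 * (x 1 * x 0))))) * t := by simp [mul_assoc]
      _ = t := by rw [hrev, one_mul]
  simp only [_root_.mul_inv_rev, hinv, mul_assoc]
  simp only [key, key2]
  exact hrev

/-- The images of the generators `a₁, b₁, a₂, b₂` under `ι`. -/
def pentMap : Fin 2 × Bool → GammaP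
  | (0, false) => qgen 1 * qgen 0
  | (0, true) => qgen 1 * qgen 2
  | (1, false) => qgen 4 * qgen 3
  | (1, true) => qgen 4 * qgen 5

lemma surfaceRel_two :
    surfaceRel 2 = commF (FreeGroup.of ((1 : Fin 2), false)) (FreeGroup.of ((1 : Fin 2), true)) *
      commF (FreeGroup.of ((0 : Fin 2), false)) (FreeGroup.of ((0 : Fin 2), true)) := by
  have h : List.finRange 2 = [0, 1] := by decide
  simp [surfaceRel, h]

/-- The embedding `ι : Γ₂ → Γ`, `a₁ ↦ q₂q₁`, `b₁ ↦ q₂q₃`, `a₂ ↦ q₅q₄`, `b₂ ↦ q₅q₆`. -/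
def iota : Gamma2 →* GammaP :=
  PresentedGroup.toGroup (f := pentMap) (by
    intro r hr
    rw [Set.mem_singleton_iff] at hr
    subst hr
    rw [surfaceRel_two]
    simp only [commF, _root_.map_mul, _root_.map_inv, FreeGroup.lift_apply_of]
    have h01 : pentMap ((0 : Fin 2), false) = qgen 1 * qgen 0 := rfl
    have h02 : pentMap ((0 : Fin 2), true) = qgen 1 * qgen 2 := rfl
    have h11 : pentMap ((1 : Fin 2), false) = qgen 4 * qgen 3 := rfl
    have h12 : pentMap ((1 : Fin 2), true) = qgen 4 * qgen 5 := rfl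
    rw [h01, h02, h11, h12]
    exact pent_helper (fun i => qgen i) qgen_mul_self qgen_prod)

/-- A pentagon representation: a non-elementary `ρ : Γ₂ → PSL(2,ℂ)` extending to `Γ` with
exactly one `qᵢ` killed. -/
def IsPentagonRep (ρ : Gamma2 →* PSL2C) : Prop :=
  IsNonElem ρ ∧ ∃ ρ' : GammaP →* PSL2C, ρ'.comp iota = ρ ∧ ∃! i : Fin 6, ρ' (qgen i) = 1

/-- A primitive element of the free group `F₂`: part of a free basis. -/
def IsPrimitiveF2 (γ : FreeGroup (Fin 2)) : Prop :=
  ∃ φ : MulAut (FreeGroup (Fin 2)), φ (FreeGroup.of 0) = γ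

/-- `pp` and `pm` are the attracting resp. repelling fixed points of `α`: for a representative
`A ∈ SL(2,ℂ)` with eigenvalues `l, l⁻¹`, `|l| > 1`, they are the corresponding eigenlines. -/
def IsAttrRep (α : PSL2C) (pp pm : P1) : Prop :=
  ∃ A : SL2C, projPSL A = α ∧ ∃ l : ℂ, 1 < ‖l‖ ∧
    ∃ (v w : Fin 2 → ℂ) (hv : v ≠ 0) (hw : w ≠ 0),
      (A : Matrix (Fin 2) (Fin 2) ℂ) *ᵥ v = l • v ∧
      (A : Matrix (Fin 2) (Fin 2) ℂ) *ᵥ w = l⁻¹ • w ∧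
      pp = Projectivization.mk ℂ v hv ∧ pm = Projectivization.mk ℂ w hw

/-!
Write `A₁, B₁, A₂, B₂` for the images of `a₁, b₁, a₂, b₂` and `J = B₂A₁⁻¹`. In a basis of
lifts of the fixed points `p, q` of `B₁`, a lift of `J` is antidiagonal and a lift of `B₁` is
diagonal; hence `J² = 1` and `JB₁J = B₁⁻¹` in `PSL(2,ℂ)`. Since `A₂` conjugates the loxodromic
`B₂` to `B₂⁻¹`, a trace computation gives `tr A₂ = 0`, i.e. `A₂² = 1`. The surface relation then
reads `[A₁,B₁] = B₂²`, which turns into `B₂B₁B₂ = JB₁J = B₁⁻¹`, and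
`q₁, …, q₆ ↦ B₁B₂, B₁J, J, 1, A₂, A₂B₂` extends `ρ` to `Γ`. No other `qᵢ` is killed: otherwise
`J` would fix `p`, `A₁` would send `q` to `p`, or `B₂` would be an involution.
-/

open scoped MatrixGroups LinearAlgebra.Projectivization
open Projectivization

section CommRing

variable {R : Type*} [CommRing R]

local notation:1024 "↑ₘ" A:1024 => ((A : SL(2, R)) : Matrix (Fin 2) (Fin 2) R)

theorem Matrix.det_of_mulVec (M : Matrix (Fin 2) (Fin 2) R) (v w : Fin 2 → R) :
    (of ![M *ᵥ v, M *ᵥ w]).det = M.det * (of ![v, w]).det := by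
  simp only [mulVec_fin_two, det_fin_two, of_apply, cons_val', cons_val_zero, cons_val_fin_one,
    cons_val_one]
  ring

namespace Matrix.SpecialLinearGroup

open Polynomial in
theorem mul_self_eq_trace_smul_sub_one [Nontrivial R] (M : SL(2, R)) :
    ↑ₘM * ↑ₘM = trace ↑ₘM • ↑ₘM - 1 := by
  have h := aeval_self_charpoly ↑ₘM
  rw [charpoly_fin_two, M.det_coe] at h
  simp only [map_add, map_sub, map_mul, aeval_X, aeval_C, map_one,
    Algebra.algebraMap_eq_smul_one, smul_mul_assoc, one_mul, sq] at h
  rw [← sub_eq_zero, ← h]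
  abel

theorem coe_inv_eq_trace_smul_sub (M : SL(2, R)) : ↑ₘM⁻¹ = trace ↑ₘM • 1 - ↑ₘM := by
  rw [coe_inv, adjugate_fin_two]
  ext i j
  fin_cases i <;> fin_cases j <;> simp [trace_fin_two]

theorem trace_mul_self [Nontrivial R] (M : SL(2, R)) : trace (↑ₘM * ↑ₘM) = trace ↑ₘM ^ 2 - 2 := by
  rw [mul_self_eq_trace_smul_sub_one, trace_sub, trace_smul, trace_one, Fintype.card_fin,
    smul_eq_mul]
  push_cast
  ring

theorem trace_inv (M : SL(2, R)) : trace ↑ₘM⁻¹ = trace ↑ₘM := by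
  rw [coe_inv_eq_trace_smul_sub, trace_sub, trace_smul, trace_one, Fintype.card_fin, smul_eq_mul]
  push_cast
  ring

end Matrix.SpecialLinearGroup

end CommRing

section Field

variable {K : Type*} [Field K]

local notation:1024 "↑ₘ" A:1024 => ((A : SL(2, K)) : Matrix (Fin 2) (Fin 2) K)

theorem Matrix.ext_of_mulVec_pair {X Y : Matrix (Fin 2) (Fin 2) K} {v w : Fin 2 → K}
    (hvw : (of ![v, w]).det ≠ 0) (hv : X *ᵥ v = Y *ᵥ v) (hw : X *ᵥ w = Y *ᵥ w) : X = Y := by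
  have hP : IsUnit (of ![v, w])ᵀ := by
    rwa [isUnit_iff_isUnit_det, det_transpose, isUnit_iff_ne_zero]
  refine hP.mul_left_inj.mp ?_
  ext i j
  fin_cases j
  · simpa [mul_apply, mulVec, dotProduct] using congrFun hv i
  · simpa [mul_apply, mulVec, dotProduct] using congrFun hw i

namespace Matrix.SpecialLinearGroup

/-- Since `M⁻¹ = (tr M) • 1 - M`, the hypothesis says `MN + NM = (tr M) • N`; comparing the traces
of this identity and of its left product with `M` gives `(tr² M - 4) tr N = 0`. -/
theorem trace_eq_zero_of_inv_mul_eq_mul {M N : SL(2, K)} (hM : trace ↑ₘM ^ 2 ≠ 4)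
    (h : M⁻¹ * N = N * M) : trace ↑ₘN = 0 := by
  set T := trace ↑ₘM
  have hanti : ↑ₘM * ↑ₘN + ↑ₘN * ↑ₘM = T • ↑ₘN := by
    have := congrArg (fun X : SL(2, K) => ↑ₘX) h
    simp only [coe_mul, coe_inv_eq_trace_smul_sub, sub_mul, smul_mul_assoc, one_mul] at this
    rw [← this]
    abel
  have hMMN : trace (↑ₘM * ↑ₘM * ↑ₘN) = T * trace (↑ₘM * ↑ₘN) - trace ↑ₘN := by
    rw [mul_self_eq_trace_smul_sub_one, sub_mul, smul_mul_assoc, one_mul, trace_sub, trace_smul,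
      smul_eq_mul]
  have h1 : 2 * trace (↑ₘM * ↑ₘN) = T * trace ↑ₘN := by
    have := congrArg trace hanti
    rw [trace_add, trace_mul_comm ↑ₘN, trace_smul, smul_eq_mul] at this
    linear_combination this
  have h2 : 2 * trace (↑ₘM * ↑ₘM * ↑ₘN) = T * trace (↑ₘM * ↑ₘN) := by
    have := congrArg (fun X => trace (↑ₘM * X)) hanti
    simp only [mul_add, mul_smul_comm, trace_add, trace_smul, smul_eq_mul] at this
    rw [← mul_assoc, ← mul_assoc, trace_mul_cycle ↑ₘM ↑ₘN ↑ₘM] at this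
    linear_combination this
  have hT : (T ^ 2 - 4) * trace ↑ₘN = 0 := by linear_combination -T * h1 + 2 * h2 - 4 * hMMN
  exact (mul_eq_zero.mp hT).resolve_left (sub_ne_zero.mpr hM)

theorem coe_eq_or_eq_neg_of_mk_eq {X Y : SL(2, K)} (h : (X : PSL(2, K)) = Y) :
    ↑ₘX = ↑ₘY ∨ ↑ₘX = -↑ₘY := by
  obtain ⟨r, hr, hrY⟩ := mem_center_iff.mp (QuotientGroup.eq.mp h.symm)
  have hX : ↑ₘX = r • ↑ₘY := by
    rw [← mul_inv_cancel_left Y X, coe_mul, ← hrY, scalar_apply, ← smul_one_eq_diagonal,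
      mul_smul_comm, mul_one]
  rcases mul_self_eq_one_iff.mp (by rwa [← sq] : r * r = 1) with rfl | rfl
  · exact .inl (by simpa using hX)
  · exact .inr (by simpa using hX)

theorem mk_eq_one_of_coe_eq_neg_one {X : SL(2, K)} (h : ↑ₘX = -1) : (X : PSL(2, K)) = 1 :=
  (QuotientGroup.eq_one_iff X).mpr <| mem_center_iff.mpr
    ⟨-1, by norm_num, by rw [h, scalar_apply, ← smul_one_eq_diagonal, neg_one_smul]⟩

theorem mul_eq_neg_one_of_swap {J : SL(2, K)} {v w : Fin 2 → K} {s t : K}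
    (hvw : (of ![v, w]).det ≠ 0) (hv : ↑ₘJ *ᵥ v = s • w) (hw : ↑ₘJ *ᵥ w = t • v) :
    s * t = -1 := by
  have h := det_of_mulVec ↑ₘJ v w
  rw [hv, hw, J.det_coe, one_mul] at h
  refine mul_right_cancel₀ hvw ?_
  simp only [det_fin_two, of_apply, cons_val_zero, cons_val_one, Pi.smul_apply,
    smul_eq_mul] at h ⊢
  linear_combination -h

theorem mul_eq_one_of_eigenvectors {B : SL(2, K)} {v w : Fin 2 → K} {a b : K}
    (hvw : (of ![v, w]).det ≠ 0) (hv : ↑ₘB *ᵥ v = a • v) (hw : ↑ₘB *ᵥ w = b • w) :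
    a * b = 1 := by
  have h := det_of_mulVec ↑ₘB v w
  rw [hv, hw, B.det_coe, one_mul] at h
  refine mul_right_cancel₀ hvw ?_
  simp only [det_fin_two, of_apply, cons_val_zero, cons_val_one, Pi.smul_apply,
    smul_eq_mul] at h ⊢
  linear_combination h

theorem coe_mul_self_eq_neg_one_of_swap {J : SL(2, K)} {v w : Fin 2 → K} {s t : K}
    (hvw : (of ![v, w]).det ≠ 0) (hv : ↑ₘJ *ᵥ v = s • w) (hw : ↑ₘJ *ᵥ w = t • v) :
    ↑ₘJ * ↑ₘJ = -1 := by
  have hst := mul_eq_neg_one_of_swap hvw hv hw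
  refine ext_of_mulVec_pair hvw ?_ ?_
  · rw [← mulVec_mulVec, hv, mulVec_smul, hw, smul_smul, hst, neg_mulVec, one_mulVec,
      neg_one_smul]
  · rw [← mulVec_mulVec, hw, mulVec_smul, hv, smul_smul, mul_comm, hst, neg_mulVec, one_mulVec,
      neg_one_smul]

theorem coe_conj_mul_eq_neg_one_of_swap {J B : SL(2, K)} {v w : Fin 2 → K} {s t a b : K}
    (hvw : (of ![v, w]).det ≠ 0) (hJv : ↑ₘJ *ᵥ v = s • w) (hJw : ↑ₘJ *ᵥ w = t • v)
    (hBv : ↑ₘB *ᵥ v = a • v) (hBw : ↑ₘB *ᵥ w = b • w) : ↑ₘJ * ↑ₘB * ↑ₘJ * ↑ₘB = -1 := by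
  have hst := mul_eq_neg_one_of_swap hvw hJv hJw
  have hab := mul_eq_one_of_eigenvectors hvw hBv hBw
  refine ext_of_mulVec_pair hvw ?_ ?_
  · simp only [← mulVec_mulVec, hJv, hJw, hBv, hBw, mulVec_smul, smul_smul, neg_mulVec,
      one_mulVec, ← neg_one_smul K v]
    congr 1
    linear_combination (a * b) * hst - hab
  · simp only [← mulVec_mulVec, hJv, hJw, hBv, hBw, mulVec_smul, smul_smul, neg_mulVec,
      one_mulVec, ← neg_one_smul K w]
    congr 1
    linear_combination (a * b) * hst - hab

end Matrix.SpecialLinearGroup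

namespace Projectivization

theorem det_of_rep_ne_zero {p q : ℙ K (Fin 2 → K)} (h : p ≠ q) :
    (of ![p.rep, q.rep]).det ≠ 0 := by
  have hli := independent_iff.mp ((independent_pair_iff_ne p q).mpr h)
  have hrow : (of ![p.rep, q.rep]).row = Projectivization.rep ∘ ![p, q] := by
    ext i : 1
    fin_cases i <;> rfl
  have hunit : IsUnit (of ![p.rep, q.rep]) := linearIndependent_rows_iff_isUnit.mp (hrow ▸ hli)
  exact ((isUnit_iff_isUnit_det _).mp hunit).ne_zero

theorem exists_mulVec_rep_eq_smul {N : SL(2, K)} {p q : ℙ K (Fin 2 → K)}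
    (h : (N : PSL(2, K)) • p = q) : ∃ c : K, ↑ₘN *ᵥ p.rep = c • q.rep := by
  rw [← mk_rep p, ← mk_rep q, ProjectiveSpecialLinearGroup.smul_proj_mk, smul_mk,
    mk_eq_mk_iff'] at h
  obtain ⟨c, hc⟩ := h
  exact ⟨c, hc.symm⟩

end Projectivization

namespace Matrix.ProjectiveSpecialLinearGroup

open Matrix.SpecialLinearGroup

theorem mul_self_eq_one_of_swap {J : PSL(2, K)} {p q : ℙ K (Fin 2 → K)} (hpq : p ≠ q)
    (hp : J • p = q) (hq : J • q = p) : J * J = 1 := by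
  obtain ⟨N, rfl⟩ := QuotientGroup.mk_surjective J
  obtain ⟨s, hs⟩ := exists_mulVec_rep_eq_smul hp
  obtain ⟨t, ht⟩ := exists_mulVec_rep_eq_smul hq
  rw [← QuotientGroup.mk_mul]
  exact mk_eq_one_of_coe_eq_neg_one
    (coe_mul_self_eq_neg_one_of_swap (det_of_rep_ne_zero hpq) hs ht)

theorem conj_eq_inv_of_swap {B J : PSL(2, K)} {p q : ℙ K (Fin 2 → K)} (hpq : p ≠ q)
    (hBp : B • p = p) (hBq : B • q = q) (hJp : J • p = q) (hJq : J • q = p) :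
    J * B * J = B⁻¹ := by
  obtain ⟨N, rfl⟩ := QuotientGroup.mk_surjective J
  obtain ⟨M, rfl⟩ := QuotientGroup.mk_surjective B
  obtain ⟨s, hs⟩ := exists_mulVec_rep_eq_smul hJp
  obtain ⟨t, ht⟩ := exists_mulVec_rep_eq_smul hJq
  obtain ⟨a, ha⟩ := exists_mulVec_rep_eq_smul hBp
  obtain ⟨b, hb⟩ := exists_mulVec_rep_eq_smul hBq
  refine eq_inv_of_mul_eq_one_left ?_
  simp only [← QuotientGroup.mk_mul]
  exact mk_eq_one_of_coe_eq_neg_one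
    (coe_conj_mul_eq_neg_one_of_swap (det_of_rep_ne_zero hpq) hs ht ha hb)

end Matrix.ProjectiveSpecialLinearGroup

end Field

theorem pslAct_eq_smul (g : PSL2C) (x : P1) : pslAct g x = g • x := by
  induction x using Projectivization.ind with
  | h v hv =>
    conv_rhs => rw [← QuotientGroup.out_eq' g]
    rfl

namespace IsLoxodromic

open Matrix.SpecialLinearGroup

variable {g : PSL2C}

theorem trace_out_sq_ne (hg : IsLoxodromic g) {r : ℝ} (h0 : 0 ≤ r) (h4 : r ≤ 4) :
    trace (Quotient.out g : SL2C).1 ^ 2 ≠ r :=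
  fun h => hg ⟨r, h0, h4, h⟩

theorem mul_self_ne_one (hg : IsLoxodromic g) : g * g ≠ 1 := by
  intro h
  set N : SL2C := Quotient.out g
  have hN : ((N * N : SL2C) : PSL2C) = ((1 : SL2C) : PSL2C) := by
    rw [QuotientGroup.mk_mul, QuotientGroup.out_eq', h, QuotientGroup.mk_one]
  have htr := trace_mul_self N
  rcases coe_eq_or_eq_neg_of_mk_eq hN with h1 | h1 <;>
    rw [← coe_mul, h1] at htr <;>
    simp only [coe_one, trace_neg, trace_one, Fintype.card_fin, Nat.cast_ofNat] at htr
  · exact hg.trace_out_sq_ne (r := 4) (by norm_num) le_rfl (by push_cast; linear_combination -htr)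
  · exact hg.trace_out_sq_ne (r := 0) le_rfl (by norm_num) (by push_cast; linear_combination -htr)

theorem mul_self_eq_one_of_inv_mul_inv_mul_eq {f : PSL2C} (hg : IsLoxodromic g)
    (h : f⁻¹ * g⁻¹ * f = g) : f * f = 1 := by
  set M : SL2C := Quotient.out g
  set N : SL2C := Quotient.out f
  have hM : (M : PSL2C) = g := QuotientGroup.out_eq' g
  have hN : (N : PSL2C) = f := QuotientGroup.out_eq' f
  have hconj : ((N⁻¹ * M⁻¹ * N : SL2C) : PSL2C) = M := by
    simp only [QuotientGroup.mk_mul, QuotientGroup.mk_inv, hM, hN, h]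
  have hT : trace (N⁻¹ * M⁻¹ * N : SL2C).1 = trace M.1 := by
    rw [coe_mul, coe_mul, trace_mul_cycle, ← coe_mul N, mul_inv_cancel, coe_one, one_mul, trace_inv]
  rcases coe_eq_or_eq_neg_of_mk_eq hconj with h1 | h1
  · have hMN : M⁻¹ * N = N * M := by
      calc M⁻¹ * N = N * (N⁻¹ * M⁻¹ * N) := by rw [mul_assoc N⁻¹, mul_inv_cancel_left]
        _ = N * M := by rw [Subtype.ext h1]
    have h4 : trace M.1 ^ 2 ≠ 4 := by
      exact_mod_cast hg.trace_out_sq_ne (r := 4) (by norm_num) le_rfl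
    have htr := trace_eq_zero_of_inv_mul_eq_mul h4 hMN
    rw [← hN, ← QuotientGroup.mk_mul]
    exact mk_eq_one_of_coe_eq_neg_one
      (by rw [coe_mul, mul_self_eq_trace_smul_sub_one, htr, zero_smul, zero_sub])
  · rw [h1, trace_neg, neg_eq_iff_add_eq_zero, ← two_mul, mul_eq_zero] at hT
    refine absurd ?_ (hg.trace_out_sq_ne (r := 0) le_rfl (by norm_num))
    rw [hT.resolve_left two_ne_zero]
    norm_num

end IsLoxodromic

section Pentagon

variable {G : Type*} [Group G]

def GammaP.lift (x : Fin 6 → G) (hx : ∀ i, x i * x i = 1)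
    (hprod : x 0 * (x 1 * (x 2 * (x 3 * (x 4 * x 5)))) = 1) : GammaP →* G :=
  PresentedGroup.toGroup <| by
    rintro r (⟨i, rfl⟩ | rfl)
    · simpa using hx i
    · simpa [show List.finRange 6 = [0, 1, 2, 3, 4, 5] by decide] using hprod

theorem GammaP.lift_qgen (x : Fin 6 → G) (hx : ∀ i, x i * x i = 1)
    (hprod : x 0 * (x 1 * (x 2 * (x 3 * (x 4 * x 5)))) = 1) (i : Fin 6) :
    GammaP.lift x hx hprod (qgen i) = x i :=
  PresentedGroup.toGroup.of _

theorem comp_iota_eq {ρ' : GammaP →* G} {ρ : Gamma2 →* G}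
    (ha₁ : ρ' (qgen 1) * ρ' (qgen 0) = ρ a1) (hb₁ : ρ' (qgen 1) * ρ' (qgen 2) = ρ b1)
    (ha₂ : ρ' (qgen 4) * ρ' (qgen 3) = ρ a2) (hb₂ : ρ' (qgen 4) * ρ' (qgen 5) = ρ b2) :
    ρ'.comp iota = ρ := by
  refine PresentedGroup.ext fun ⟨i, b⟩ => ?_
  fin_cases i <;> cases b
  · exact (map_mul ρ' _ _).trans ha₁
  · exact (map_mul ρ' _ _).trans hb₁
  · exact (map_mul ρ' _ _).trans ha₂
  · exact (map_mul ρ' _ _).trans hb₂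

theorem map_surfaceRel_two (ρ : Gamma2 →* G) :
    (ρ b2)⁻¹ * (ρ a2)⁻¹ * ρ b2 * ρ a2 * ((ρ b1)⁻¹ * (ρ a1)⁻¹ * ρ b1 * ρ a1) = 1 := by
  have h := congrArg ρ <| PresentedGroup.one_of_mem (Set.mem_singleton_iff.mpr surfaceRel_two.symm)
  simp only [commF, map_mul, map_inv, map_one] at h
  exact h

def pentagonImages (A₁ B₁ A₂ B₂ : G) : Fin 6 → G :=
  ![B₁ * B₂, B₁ * (B₂ * A₁⁻¹), B₂ * A₁⁻¹, 1, A₂, A₂ * B₂]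

variable {A₁ B₁ A₂ B₂ : G}

theorem mul_mul_eq_inv_of_surface_relation (hJ : B₂ * A₁⁻¹ * (B₂ * A₁⁻¹) = 1)
    (hJB : B₂ * A₁⁻¹ * B₁ * (B₂ * A₁⁻¹) = B₁⁻¹) (hB₂ : A₂⁻¹ * B₂⁻¹ * A₂ = B₂)
    (hrel : B₂⁻¹ * A₂⁻¹ * B₂ * A₂ * (B₁⁻¹ * A₁⁻¹ * B₁ * A₁) = 1) :
    B₂ * B₁ * B₂ = B₁⁻¹ := by
  have hconj : A₂⁻¹ * B₂ * A₂ = B₂⁻¹ := by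
    calc A₂⁻¹ * B₂ * A₂ = (A₂⁻¹ * B₂⁻¹ * A₂)⁻¹ := by group
      _ = B₂⁻¹ := by rw [hB₂]
  have hcomm : B₁⁻¹ * A₁⁻¹ * B₁ * A₁ = B₂ * B₂ := by
    rw [show B₂⁻¹ * A₂⁻¹ * B₂ * A₂ = B₂⁻¹ * (A₂⁻¹ * B₂ * A₂) by group, hconj] at hrel
    calc B₁⁻¹ * A₁⁻¹ * B₁ * A₁ = (B₂⁻¹ * B₂⁻¹)⁻¹ := eq_inv_of_mul_eq_one_right hrel
      _ = B₂ * B₂ := by rw [_root_.mul_inv_rev, inv_inv]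
  calc B₂ * B₁ * B₂ = B₂ * B₁ * B₂ * (B₂ * A₁⁻¹ * (B₂ * A₁⁻¹)) := by rw [hJ, mul_one]
    _ = B₂ * (B₁ * (B₂ * B₂)) * A₁⁻¹ * (B₂ * A₁⁻¹) := by group
    _ = B₂ * (B₁ * (B₁⁻¹ * A₁⁻¹ * B₁ * A₁)) * A₁⁻¹ * (B₂ * A₁⁻¹) := by rw [hcomm]
    _ = B₂ * A₁⁻¹ * B₁ * (B₂ * A₁⁻¹) := by group
    _ = B₁⁻¹ := hJB

theorem pentagonImages_mul_self (hJ : B₂ * A₁⁻¹ * (B₂ * A₁⁻¹) = 1)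
    (hJB : B₂ * A₁⁻¹ * B₁ * (B₂ * A₁⁻¹) = B₁⁻¹) (hB₂B₁ : B₂ * B₁ * B₂ = B₁⁻¹)
    (hA₂ : A₂ * A₂ = 1) (hB₂ : A₂⁻¹ * B₂⁻¹ * A₂ = B₂) (i : Fin 6) :
    pentagonImages A₁ B₁ A₂ B₂ i * pentagonImages A₁ B₁ A₂ B₂ i = 1 := by
  fin_cases i <;> simp only [pentagonImages, Fin.zero_eta, Fin.mk_one, Fin.reduceFinMk,
    Matrix.cons_val]
  · calc B₁ * B₂ * (B₁ * B₂) = B₁ * (B₂ * B₁ * B₂) := by group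
      _ = 1 := by rw [hB₂B₁, mul_inv_cancel]
  · calc B₁ * (B₂ * A₁⁻¹) * (B₁ * (B₂ * A₁⁻¹)) = B₁ * (B₂ * A₁⁻¹ * B₁ * (B₂ * A₁⁻¹)) := by group
      _ = 1 := by rw [hJB, mul_inv_cancel]
  · exact hJ
  · exact mul_one 1
  · exact hA₂
  · calc A₂ * B₂ * (A₂ * B₂) = A₂ * B₂ * (A₂ * (A₂⁻¹ * B₂⁻¹ * A₂)) := by rw [hB₂]
      _ = A₂ * A₂ := by group
      _ = 1 := hA₂

theorem pentagonImages_prod (hJ : B₂ * A₁⁻¹ * (B₂ * A₁⁻¹) = 1) (hB₂B₁ : B₂ * B₁ * B₂ = B₁⁻¹)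
    (hA₂ : A₂ * A₂ = 1) :
    let x := pentagonImages A₁ B₁ A₂ B₂
    x 0 * (x 1 * (x 2 * (x 3 * (x 4 * x 5)))) = 1 := by
  calc B₁ * B₂ * (B₁ * (B₂ * A₁⁻¹) * (B₂ * A₁⁻¹ * (1 * (A₂ * (A₂ * B₂)))))
      = B₁ * (B₂ * B₁ * (B₂ * A₁⁻¹ * (B₂ * A₁⁻¹)) * (A₂ * A₂) * B₂) := by group
    _ = 1 := by rw [hJ, hA₂, mul_one, mul_one, hB₂B₁, mul_inv_cancel]

theorem exists_pentagon_lift (ρ : Gamma2 →* G) (hJ : ρ b2 * (ρ a1)⁻¹ * (ρ b2 * (ρ a1)⁻¹) = 1)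
    (hJB : ρ b2 * (ρ a1)⁻¹ * ρ b1 * (ρ b2 * (ρ a1)⁻¹) = (ρ b1)⁻¹) (hA₂ : ρ a2 * ρ a2 = 1)
    (hB₂ : (ρ a2)⁻¹ * (ρ b2)⁻¹ * ρ a2 = ρ b2) :
    ∃ ρ' : GammaP →* G, ρ'.comp iota = ρ ∧
      ∀ i, ρ' (qgen i) = pentagonImages (ρ a1) (ρ b1) (ρ a2) (ρ b2) i := by
  have hB₂B₁ := mul_mul_eq_inv_of_surface_relation hJ hJB hB₂ (map_surfaceRel_two ρ)
  refine ⟨GammaP.lift _ (pentagonImages_mul_self hJ hJB hB₂B₁ hA₂ hB₂)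
    (pentagonImages_prod hJ hB₂B₁ hA₂), comp_iota_eq ?_ ?_ ?_ ?_, GammaP.lift_qgen _ _ _⟩ <;>
    simp only [GammaP.lift_qgen, pentagonImages, Matrix.cons_val]
  · calc ρ b1 * (ρ b2 * (ρ a1)⁻¹) * (ρ b1 * ρ b2)
        = ρ b1 * (ρ b2 * (ρ a1)⁻¹ * ρ b1 * (ρ b2 * (ρ a1)⁻¹)) * (ρ b2 * (ρ a1)⁻¹)⁻¹ * ρ b2 := by
          group
      _ = ρ a1 := by rw [hJB]; group
  · rw [mul_assoc, hJ, mul_one]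
  · exact mul_one _
  · rw [← mul_assoc, hA₂, one_mul]

end Pentagon

theorem pentagonImages_eq_one_iff {A₁ B₁ A₂ B₂ : PSL2C} {p q : P1} (hpq : p ≠ q)
    (hp : B₁ • p = p) (hq : B₁ • q = q) (hJp : (B₂ * A₁⁻¹) • p = q)
    (hA₁ : ¬ SendsFixedToOther A₁ B₁) (hB₂ : IsLoxodromic B₂) (hA₂ : A₂ * A₂ = 1)
    (hA₂B₂ : A₂⁻¹ * B₂⁻¹ * A₂ = B₂) (i : Fin 6) :
    pentagonImages A₁ B₁ A₂ B₂ i = 1 ↔ i = 3 := by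
  refine ⟨fun h => ?_, fun h => h ▸ rfl⟩
  have hp' : B₁⁻¹ • p = p := inv_smul_eq_iff.mpr hp.symm
  have hq' : B₁⁻¹ • q = q := inv_smul_eq_iff.mpr hq.symm
  fin_cases i <;>
    simp only [pentagonImages, Fin.zero_eta, Fin.mk_one, Fin.reduceFinMk, Matrix.cons_val] at h
  · refine absurd ⟨p, q, hpq, ?_, ?_, .inr ?_⟩ hA₁ <;> simp only [pslAct_eq_smul]
    · exact hp
    · exact hq
    · rw [show A₁ = (B₂ * A₁⁻¹)⁻¹ * B₁⁻¹ by rw [← eq_inv_of_mul_eq_one_right h]; group, mul_smul,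
        hq', inv_smul_eq_iff, hJp]
  · rw [eq_inv_of_mul_eq_one_right h, hp'] at hJp
    exact absurd hJp hpq
  · rw [h, one_smul] at hJp
    exact absurd hJp hpq
  · rfl
  · rw [h, inv_one, one_mul, mul_one, inv_eq_iff_eq_inv] at hA₂B₂
    exact absurd (mul_eq_one_iff_eq_inv.mpr hA₂B₂) hB₂.mul_self_ne_one
  · rw [eq_inv_of_mul_eq_one_right h] at hB₂
    exact absurd (by rw [← _root_.mul_inv_rev, hA₂, inv_one]) hB₂.mul_self_ne_one

theorem statement3_general (ρ : Gamma2 →* PSL2C)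
    (h4 : ¬ SendsFixedToOther (ρ a1) (ρ b1))
    (h5 : IsLoxodromic (ρ b2))
    (h6 : (ρ a2)⁻¹ * (ρ b2)⁻¹ * ρ a2 = ρ b2)
    (h7 : InterchangesFixed (ρ (b2 * a1⁻¹)) (ρ b1)) :
    ∃ ρ' : GammaP →* PSL2C, ρ'.comp iota = ρ ∧ ∃! i : Fin 6, ρ' (qgen i) = 1 := by
  obtain ⟨p, q, hpq, hp, hq, hJp, hJq⟩ := h7
  simp only [pslAct_eq_smul, map_mul, map_inv] at hp hq hJp hJq
  have hA₂ := h5.mul_self_eq_one_of_inv_mul_inv_mul_eq h6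
  obtain ⟨ρ', hρ', hρ'q⟩ := exists_pentagon_lift ρ
    (Matrix.ProjectiveSpecialLinearGroup.mul_self_eq_one_of_swap hpq hJp hJq)
    (Matrix.ProjectiveSpecialLinearGroup.conj_eq_inv_of_swap hpq hp hq hJp hJq) hA₂ h6
  refine ⟨ρ', hρ', ?_⟩
  simp only [hρ'q, pentagonImages_eq_one_iff hpq hp hq hJp h4 h5 hA₂ h6, existsUnique_eq]

/-- the characterization of pentagon representations in special form. -/
theorem statement3 (ρ : Gamma2 →* PSL2C) (hne : IsNonElem ρ)
    (h1 : IsLoxodromic (ρ a1)) (h2 : IsLoxodromic (ρ b1))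
    (h3 : ¬ IsElementarySubgroup (Subgroup.closure {ρ a1, ρ b1}))
    (h4 : ¬ SendsFixedToOther (ρ a1) (ρ b1))
    (h5 : IsLoxodromic (ρ b2))
    (h6 : (ρ a2)⁻¹ * (ρ b2)⁻¹ * ρ a2 = ρ b2)
    (h7 : InterchangesFixed (ρ (b2 * a1⁻¹)) (ρ b1)) :
    ∃ ρ' : GammaP →* PSL2C, ρ'.comp iota = ρ ∧ ∃! i : Fin 6, ρ' (qgen i) = 1 :=
  statement3_general ρ h4 h5 h6 h7
end
end

section
/- Let α ∈ PSL(2,ℂ) be parabolic with fixed point p ∈ ℙ¹(ℂ), and let β ∈ PSL(2,ℂ) with β(p) ≠ p. Then there exists K > 0 such that αᵏβ is loxodromic for all integers k with |k| ≥ K. -/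
/- Common setup: PSL(2,ℂ), its action on ℙ¹(ℂ), loxodromic/parabolic/elliptic elements,
elementary subgroups, surface groups, the pentagon group Γ and the embedding ι. -/

noncomputable section

open Matrix

/-! Normalise `α` to a representative `A = 1 + N` of trace `2`: then `N ≠ 0`, `N² = 0`, so
`Aᵏ = 1 + k N` and `tr (Aᵏ B) = tr B + k tr (N B)`. If `v` spans the line `p`, then `N v = 0`;
for a traceless `N` killing `v` one has `N (B v) = tr (N B) v`, so `tr (N B) = 0` would make `N`
vanish on `v` and `B v`, which span `ℂ²` because `β` moves `p`. Hence `tr (N B) ≠ 0`,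
`|tr (Aᵏ B)| → ∞`, and `tr² (αᵏ β)` eventually leaves `[0, 4]`. -/

lemma Matrix.sub_one_sq_eq_zero {K : Type*} [Field K] [NeZero (2 : K)]
    {A : Matrix (Fin 2) (Fin 2) K} (htr : trace A = 2) (hdet : A.det = 1) : (A - 1) ^ 2 = 0 := by
  have h := sub_scalar_sq_eq_discr (m := A)
  rwa [discr_fin_two, htr, hdet, div_self two_ne_zero, map_one,
    show (2 : K) ^ 2 - 4 * 1 = 0 by norm_num, zero_div, map_zero] at h

lemma Matrix.mulVec_eq_zero_of_sq_eq_zero {K n : Type*} [Field K] [Fintype n] [DecidableEq n]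
    {N : Matrix n n K} (hN : N ^ 2 = 0) {v : n → K} (hv : v ≠ 0) {c : K} (h : N *ᵥ v = c • v) :
    N *ᵥ v = 0 := by
  have hc : (c * c) • v = 0 := by
    rw [← smul_smul, ← h, ← mulVec_smul, ← h, mulVec_mulVec, ← sq, hN, zero_mulVec]
  rw [h, mul_self_eq_zero.1 ((smul_eq_zero.1 hc).resolve_right hv), zero_smul]

lemma Matrix.eq_zero_of_mulVec_eq_zero_of_linearIndependent {K m : Type*} [Field K]
    {N : Matrix m (Fin 2) K} {u w : Fin 2 → K} (hlin : LinearIndependent K ![u, w])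
    (hu : N *ᵥ u = 0) (hw : N *ᵥ w = 0) : N = 0 := by
  let b := basisOfLinearIndependentOfCardEqFinrank hlin (by simp)
  suffices toLin' N = 0 from toLin'.map_eq_zero_iff.1 this
  refine b.ext fun i => ?_
  fin_cases i <;> simp [b, hu, hw]

lemma Matrix.mulVec_mulVec_eq_trace_mul_smul {R : Type*} [CommRing R]
    {N : Matrix (Fin 2) (Fin 2) R} (B : Matrix (Fin 2) (Fin 2) R) {v : Fin 2 → R}
    (htr : trace N = 0) (hv : N *ᵥ v = 0) : N *ᵥ (B *ᵥ v) = trace (N * B) • v := by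
  have e0 := congrFun hv 0
  have e1 := congrFun hv 1
  simp only [mulVec, dotProduct, Fin.sum_univ_two, Pi.zero_apply] at e0 e1
  rw [trace_fin_two] at htr
  ext i
  fin_cases i <;>
    simp only [mulVec, dotProduct, Fin.sum_univ_two, trace_fin_two, mul_apply, Pi.smul_apply,
      smul_eq_mul, Fin.zero_eta, Fin.mk_one, Fin.isValue]
  · linear_combination B 1 1 * e0 - B 0 1 * e1 + (B 0 1 * v 1 - B 1 1 * v 0) * htr
  · linear_combination B 0 0 * e1 - B 1 0 * e0 + (B 1 0 * v 0 - B 0 0 * v 1) * htr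

lemma Matrix.trace_mul_ne_zero_of_linearIndependent {K : Type*} [Field K]
    {N : Matrix (Fin 2) (Fin 2) K} (B : Matrix (Fin 2) (Fin 2) K) {v : Fin 2 → K} (hN : N ≠ 0)
    (htr : trace N = 0) (hv : N *ᵥ v = 0) (hlin : LinearIndependent K ![B *ᵥ v, v]) :
    trace (N * B) ≠ 0 := by
  intro hNB
  have hBv : N *ᵥ (B *ᵥ v) = 0 := by
    rw [mulVec_mulVec_eq_trace_mul_smul B htr hv, hNB, zero_smul]
  exact hN (eq_zero_of_mulVec_eq_zero_of_linearIndependent hlin hBv hv)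

lemma Matrix.SpecialLinearGroup.coe_zpow_of_eq_one_add {n R : Type*} [Fintype n]
    [DecidableEq n] [CommRing R] (A : SpecialLinearGroup n R) {N : Matrix n n R}
    (hA : (A : Matrix n n R) = 1 + N) (hN : N ^ 2 = 0) (k : ℤ) :
    ((A ^ k : SpecialLinearGroup n R) : Matrix n n R) = 1 + (k : R) • N := by
  have hmul (a b : R) : (1 + a • N) * (1 + b • N) = 1 + (a + b) • N := by
    simp only [mul_add, add_mul, mul_one, one_mul, smul_mul_smul, ← sq, hN, smul_zero, add_zero,
      add_smul]
    abel
  have hA' : (A : Matrix n n R) = 1 + (1 : R) • N := by rw [hA, one_smul]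
  have hAinv : ((A⁻¹ : SpecialLinearGroup n R) : Matrix n n R) = 1 + (-1 : R) • N := by
    calc ((A⁻¹ : SpecialLinearGroup n R) : Matrix n n R)
        = ((A⁻¹ : SpecialLinearGroup n R) : Matrix n n R) * (A * (1 + (-1 : R) • N)) := by
          rw [hA', hmul, add_neg_cancel, zero_smul, add_zero, mul_one]
      _ = 1 + (-1 : R) • N := by rw [← mul_assoc, ← coe_mul, inv_mul_cancel, coe_one, one_mul]
  induction k using Int.induction_on with
  | zero => simp
  | succ k ih => rw [_root_.zpow_add_one, coe_mul, ih, hA', hmul]; push_cast; rfl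
  | pred k ih =>
    rw [_root_.zpow_sub_one, coe_mul, ih, hAinv, hmul, sub_eq_add_neg]; push_cast; rfl

lemma exists_forall_lt_norm_add_intCast_mul {𝕜 : Type*} [RCLike 𝕜] (b : 𝕜) {t : 𝕜}
    (ht : t ≠ 0) (C : ℝ) : ∃ K : ℤ, 0 < K ∧ ∀ k : ℤ, K ≤ |k| → C < ‖b + k * t‖ := by
  refine ⟨⌈(C + ‖b‖) / ‖t‖⌉₊ + 1, by positivity, fun k hk => ?_⟩
  have hk' : C + ‖b‖ < |(k : ℝ)| * ‖t‖ := by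
    rw [← div_lt_iff₀ (norm_pos_iff.2 ht)]
    have hceil := Nat.le_ceil ((C + ‖b‖) / ‖t‖)
    have hk_real : ((⌈(C + ‖b‖) / ‖t‖⌉₊ + 1 : ℤ) : ℝ) ≤ ((|k| : ℤ) : ℝ) := by exact_mod_cast hk
    push_cast at hk_real
    linarith
  have hkt : ‖(k : 𝕜) * t‖ = |(k : ℝ)| * ‖t‖ := by
    rw [norm_mul, ← RCLike.norm_ofReal (K := 𝕜), RCLike.ofReal_intCast]
  calc C < ‖(k : 𝕜) * t‖ - ‖b‖ := by linarith
    _ ≤ ‖b + k * t‖ := by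
      have := norm_sub_le (b + k * t) b
      rw [add_sub_cancel_left] at this
      linarith

local notation:1024 "↑ₘ" A:1024 => ((A : SL2C) : Matrix (Fin 2) (Fin 2) ℂ)

lemma projPSL_surjective : Function.Surjective projPSL := QuotientGroup.mk'_surjective _

lemma coe_eq_or_eq_neg_of_projPSL_eq {A B : SL2C} (h : projPSL A = projPSL B) :
    ↑ₘB = ↑ₘA ∨ ↑ₘB = -↑ₘA := by
  obtain ⟨z, hz, rfl⟩ := (QuotientGroup.mk'_eq_mk' _).1 h
  obtain ⟨r, hr, hrz⟩ := Matrix.SpecialLinearGroup.mem_center_iff.1 hz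
  rw [Fintype.card_fin] at hr
  rcases sq_eq_one_iff.1 hr with rfl | rfl
  · simp [← hrz]
  · rw [map_neg, map_one] at hrz
    simp [← hrz]

lemma projPSL_neg (A : SL2C) : projPSL (-A) = projPSL A := by
  refine (QuotientGroup.mk'_eq_mk' _).2 ⟨-1, ?_, by simp⟩
  exact Matrix.SpecialLinearGroup.mem_center_iff.2 ⟨-1, by norm_num, by
    rw [map_neg, map_one, Matrix.SpecialLinearGroup.coe_neg, Matrix.SpecialLinearGroup.coe_one]⟩

lemma trSq_projPSL (A : SL2C) : trSq (projPSL A) = trace ↑ₘA ^ 2 := by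
  rcases coe_eq_or_eq_neg_of_projPSL_eq (Quotient.out_eq (projPSL A)).symm with h | h <;>
    simp [trSq, h]

lemma pslAct_projPSL_mk (A : SL2C) {v : Fin 2 → ℂ} (hv : v ≠ 0) :
    pslAct (projPSL A) (Projectivization.mk ℂ v hv) =
      Projectivization.mk ℂ (↑ₘA *ᵥ v)
        (fun h => hv (sl2_toLin'_injective A (by simpa using h))) := by
  rw [pslAct, Projectivization.map_mk, Projectivization.mk_eq_mk_iff']
  rcases coe_eq_or_eq_neg_of_projPSL_eq (Quotient.out_eq (projPSL A)).symm with h | h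
  · exact ⟨1, by simp [h]⟩
  · exact ⟨-1, by simp [h]⟩

lemma exists_projPSL_eq_trace_eq_two {α : PSL2C} (h : trSq α = 4) :
    ∃ A : SL2C, projPSL A = α ∧ trace ↑ₘA = 2 := by
  obtain ⟨A, rfl⟩ := projPSL_surjective α
  rw [trSq_projPSL] at h
  have : (trace ↑ₘA - 2) * (trace ↑ₘA + 2) = 0 := by linear_combination h
  rcases mul_eq_zero.1 this with h2 | h2
  · exact ⟨A, rfl, by linear_combination h2⟩
  · refine ⟨-A, projPSL_neg A, ?_⟩
    rw [Matrix.SpecialLinearGroup.coe_neg, trace_neg]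
    linear_combination -h2

lemma IsParabolic.exists_projPSL_eq_one_add {α : PSL2C} (hα : IsParabolic α) :
    ∃ (A : SL2C) (N : Matrix (Fin 2) (Fin 2) ℂ), projPSL A = α ∧ ↑ₘA = 1 + N ∧ N ^ 2 = 0 ∧
      trace N = 0 ∧ N ≠ 0 := by
  obtain ⟨A, rfl, htrA⟩ := exists_projPSL_eq_trace_eq_two hα.2
  refine ⟨A, ↑ₘA - 1, rfl, (add_sub_cancel _ _).symm, sub_one_sq_eq_zero htrA A.det_coe,
    by rw [trace_sub, htrA, trace_one]; norm_num, fun h => hα.1 ?_⟩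
  rw [show A = 1 from Subtype.ext (sub_eq_zero.1 h), map_one]

lemma isLoxodromic_projPSL_of_two_lt_norm_trace {A : SL2C} (h : 2 < ‖trace ↑ₘA‖) :
    IsLoxodromic (projPSL A) := by
  rintro ⟨r, hr0, hr4, hr⟩
  have := congrArg norm hr
  rw [trSq_projPSL, norm_pow, Complex.norm_real, Real.norm_of_nonneg hr0] at this
  nlinarith

/-- for `α` parabolic and `β` not fixing its fixed point, `αᵏβ` is loxodromic for
`|k|` large. -/
theorem statement17 (α β : PSL2C) (p : P1) (hα : IsParabolic α) (hfix : pslAct α p = p)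
    (hβ : pslAct β p ≠ p) :
    ∃ K : ℤ, 0 < K ∧ ∀ k : ℤ, K ≤ |k| → IsLoxodromic (α ^ k * β) := by
  obtain ⟨A, N, rfl, hA, hNN, htrN, hN0⟩ := hα.exists_projPSL_eq_one_add
  obtain ⟨B, rfl⟩ := projPSL_surjective β
  induction p using Projectivization.ind with | h v hv => ?_
  rw [pslAct_projPSL_mk, Projectivization.mk_eq_mk_iff'] at hfix
  rw [pslAct_projPSL_mk, ← Projectivization.independent_pair_iff_ne,
    Projectivization.independent_mk_iff_LinearIndependent] at hβ
  have hNv : N *ᵥ v = 0 := by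
    obtain ⟨c, hc⟩ := hfix
    refine mulVec_eq_zero_of_sq_eq_zero hNN hv (c := c - 1) ?_
    rw [← add_sub_cancel_left 1 N, ← hA, sub_mulVec, one_mulVec, ← hc, sub_smul, one_smul]
  have htrace (k : ℤ) : trace ↑ₘ(A ^ k * B) = trace ↑ₘB + k * trace (N * ↑ₘB) := by
    rw [Matrix.SpecialLinearGroup.coe_mul,
      Matrix.SpecialLinearGroup.coe_zpow_of_eq_one_add A hA hNN, add_mul, one_mul, trace_add,
      smul_mul, trace_smul, smul_eq_mul]
  obtain ⟨K, hK, hlarge⟩ := exists_forall_lt_norm_add_intCast_mul (trace ↑ₘB)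
    (trace_mul_ne_zero_of_linearIndependent _ hN0 htrN hNv hβ) 2
  refine ⟨K, hK, fun k hk => ?_⟩
  rw [← map_zpow, ← map_mul]
  exact isLoxodromic_projPSL_of_two_lt_norm_trace (htrace k ▸ hlarge k hk)
end
end
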